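/- arXiv:1701.01001 — 2 statements merged into one kernel-verified Lean document; each statement's English description precedes it below -/
import Mathlib

section
/- Closed forms of the coupled Feynman-Kac measures on zero and unit strings: for all n ∈ ℕ, z_{0:n−1} ∈ Z^n, m ∈ {0,…,n}, and bounded measurable h on X, μ_{0_n}⟨z_{0:n−1}⟩ h^{⊗2} = (χQ⟨z_{0:n−1}⟩h)² and μ_{1_{m,n}}⟨z_{0:n−1}⟩ h^{⊗2} = χQ⟨z_{0:m−1}⟩1_X · χQ⟨z_{0:m−1}⟩((Q⟨z_{m:n−1}⟩h)²). -/
/-!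
Evaluate `μ_b` on tensor products `f₁ ⊗ f₂`. At a step with bit `0` the two coordinates move
independently, so the Bochner integrals factor and `μ_b⟨z_{0:n}⟩(f₁ ⊗ f₂)` equals
`μ_b⟨z_{0:n-1}⟩(Q⟨z_n⟩f₁ ⊗ Q⟨z_n⟩f₂)`; iterating down to time `0` gives `γ_n f₁ ⋅ γ_n f₂`.
At the single bit `1` at time `m` the coordinates merge: `f₁ ⊗ f₂` becomes the diagonal
function `f₁ f₂` carried by one copy, while the other copy, being a Markov step, only carries
the weight `Q1`.
-/

noncomputable section

section FeynmanKac
open MeasureTheory ProbabilityTheory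

variable {X Z : Type*} [MeasurableSpace X] [MeasurableSpace Z]

/-- The unnormalised Feynman-Kac operator `Q⟨z_{k:k+len-1}⟩` acting on functions:
`Q⟨z_{k:m}⟩h(x) = g_{z_k}(x) ∫ Q⟨z_{k+1:m}⟩h(y) M(x,dy)`, the identity when `len = 0`. -/
def Qop (M : Kernel X X) (g : Z → X → ℝ) (z : ℕ → Z) (k len : ℕ) (h : X → ℝ) : X → ℝ :=
  (List.range len).foldr (fun i acc x => g (z (k + i)) x * ∫ y, acc y ∂(M x)) h

/-- `γ⟨z_{0:n-1}⟩h = χQ⟨z_{0:n-1}⟩h`. -/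
def gammaFK (χ : Measure X) (M : Kernel X X) (g : Z → X → ℝ) (z : ℕ → Z)
    (n : ℕ) (h : X → ℝ) : ℝ :=
  ∫ x, Qop M g z 0 n h x ∂χ

/-- The predictor functional `η⟨z_{0:n-1}⟩h = χQ⟨z_{0:n-1}⟩h / χQ⟨z_{0:n-1}⟩1`. -/
def etaFK (χ : Measure X) (M : Kernel X X) (g : Z → X → ℝ) (z : ℕ → Z)
    (n : ℕ) (h : X → ℝ) : ℝ :=
  gammaFK χ M g z n h / gammaFK χ M g z n (fun _ => 1)

/-- The truncated asymptotic variance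
`σ²_ℓ⟨z_{0:n-1}⟩(h) = Σ_{m=ℓ}^n η⟨z_{0:m-1}⟩({Q⟨z_{m:n-1}⟩(h - η⟨z_{0:n-1}⟩h)}²)
  / (η⟨z_{0:m-1}⟩Q⟨z_{m:n-1}⟩1)²`. -/
def sigmaSq (χ : Measure X) (M : Kernel X X) (g : Z → X → ℝ) (z : ℕ → Z)
    (ℓ n : ℕ) (h : X → ℝ) : ℝ :=
  ∑ m ∈ Finset.Icc ℓ n,
    etaFK χ M g z m
        (fun x => (Qop M g z m (n - m) (fun y => h y - etaFK χ M g z n h) x) ^ 2)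
      / (etaFK χ M g z m (Qop M g z m (n - m) (fun _ => 1))) ^ 2

/-- Sup norm `‖h‖_∞` of a (bounded) function. -/
def supn {Y : Type*} (h : Y → ℝ) : ℝ := sSup (Set.range fun x => |h x|)

end FeynmanKac

section CoupledFK
open MeasureTheory ProbabilityTheory

variable {X Z : Type*} [MeasurableSpace X] [MeasurableSpace Z]

/-- The coupled Feynman-Kac measure `μ_{b_{0:n}}⟨z_{0:n-1}⟩` (as an integration functional):
`μ_{b_{0:n}}⟨z_{0:n-1}⟩ f = E[f(X_n, X'_n) ∏_{m=0}^{n-1} g_{z_m}(X_m) g_{z_m}(X'_m)]`, where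
`(X_m, X'_m)` is the coupled Markov chain that starts from `χ ⊗ χ` (`b_0 = 0`) or from the
diagonal copy of `χ` (`b_0 = 1`), and whose components move conditionally independently
according to `M` when `b_{m+1} = 0` and jointly (as a single draw from `M(X_m, ·)`) when
`b_{m+1} = 1`. -/
def muB (χ : Measure X) (M : Kernel X X) (g : Z → X → ℝ) (z : ℕ → Z) (b : ℕ → Bool) :
    ℕ → (X × X → ℝ) → ℝ
  | 0, f => if b 0 then ∫ x, f (x, x) ∂χ else ∫ x, ∫ y, f (x, y) ∂χ ∂χ
  | n + 1, f =>
      muB χ M g z b n fun p =>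
        g (z n) p.1 * g (z n) p.2 *
          (if b (n + 1) then ∫ y, f (y, y) ∂(M p.1)
           else ∫ y, ∫ y', f (y, y') ∂(M p.2) ∂(M p.1))

end CoupledFK

section ClosedForms
open MeasureTheory ProbabilityTheory

variable {X Z : Type*} [MeasurableSpace X] (M : Kernel X X) (χ : Measure X) (g : Z → X → ℝ)
  (z : ℕ → Z)

theorem Qop_succ (k len : ℕ) (h : X → ℝ) :
    Qop M g z k (len + 1) h
      = Qop M g z k len (fun x => g (z (k + len)) x * ∫ y, h y ∂(M x)) := by
  rw [Qop, List.range_succ, List.foldr_append]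
  rfl

theorem gammaFK_succ (n : ℕ) (h : X → ℝ) :
    gammaFK χ M g z (n + 1) h
      = gammaFK χ M g z n (fun x => g (z n) x * ∫ y, h y ∂(M x)) := by
  simp only [gammaFK, Qop_succ, zero_add]

variable {b : ℕ → Bool}

theorem muB_zero_tensor_of_false (hb : b 0 = false) (f₁ f₂ : X → ℝ) :
    muB χ M g z b 0 (fun p => f₁ p.1 * f₂ p.2) = (∫ x, f₁ x ∂χ) * ∫ x, f₂ x ∂χ := by
  simp only [muB, hb, Bool.false_eq_true, if_false, integral_const_mul, integral_mul_const]

theorem muB_succ_of_true {n : ℕ} (hb : b (n + 1) = true) (f : X × X → ℝ) :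
    muB χ M g z b (n + 1) f
      = muB χ M g z b n (fun p => g (z n) p.1 * g (z n) p.2 * ∫ y, f (y, y) ∂(M p.1)) := by
  simp only [muB, hb, if_true]

theorem muB_succ_tensor_of_false {n : ℕ} (hb : b (n + 1) = false) (f₁ f₂ : X → ℝ) :
    muB χ M g z b (n + 1) (fun p => f₁ p.1 * f₂ p.2)
      = muB χ M g z b n (fun p => (g (z n) p.1 * ∫ y, f₁ y ∂(M p.1))
          * (g (z n) p.2 * ∫ y, f₂ y ∂(M p.2))) := by
  simp only [muB, hb, Bool.false_eq_true, if_false, integral_const_mul, integral_mul_const]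
  congr 1
  funext p
  ring

theorem muB_tensor_eq_of_false_after {m n : ℕ} (hmn : m ≤ n)
    (hb : ∀ l, m < l → l ≤ n → b l = false) (f₁ f₂ : X → ℝ) :
    muB χ M g z b n (fun p => f₁ p.1 * f₂ p.2)
      = muB χ M g z b m
          (fun p => Qop M g z m (n - m) f₁ p.1 * Qop M g z m (n - m) f₂ p.2) := by
  induction n, hmn using Nat.le_induction generalizing f₁ f₂ with
  | base => simp only [Nat.sub_self, Qop, List.range_zero, List.foldr_nil]
  | succ n hmn ih =>
    rw [muB_succ_tensor_of_false M χ g z (hb (n + 1) (by omega) le_rfl),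
      ih (fun l hml hln => hb l hml (by omega)) (fun x => g (z n) x * ∫ y, f₁ y ∂(M x))
        (fun x => g (z n) x * ∫ y, f₂ y ∂(M x)), Nat.succ_sub hmn, Qop_succ, Qop_succ,
      Nat.add_sub_cancel' hmn]

theorem muB_tensor_of_forall_false {n : ℕ} (hb : ∀ l ≤ n, b l = false) (f₁ f₂ : X → ℝ) :
    muB χ M g z b n (fun p => f₁ p.1 * f₂ p.2)
      = gammaFK χ M g z n f₁ * gammaFK χ M g z n f₂ := by
  rw [muB_tensor_eq_of_false_after M χ g z n.zero_le (fun l _ hl => hb l hl),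
    muB_zero_tensor_of_false M χ g z (hb 0 n.zero_le), Nat.sub_zero]
  rfl

theorem muB_tensor_of_first_true [IsMarkovKernel M] [IsProbabilityMeasure χ] {m : ℕ}
    (hm : b m = true) (hb : ∀ l < m, b l = false) (f₁ f₂ : X → ℝ) :
    muB χ M g z b m (fun p => f₁ p.1 * f₂ p.2)
      = gammaFK χ M g z m (fun _ => 1) * gammaFK χ M g z m (fun x => f₁ x * f₂ x) := by
  cases m with
  | zero => simp [muB, hm, gammaFK, Qop]
  | succ k =>
    have hdiag : muB χ M g z b (k + 1) (fun p => f₁ p.1 * f₂ p.2)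
        = muB χ M g z b k (fun p => (g (z k) p.1 * ∫ y, f₁ y * f₂ y ∂(M p.1))
            * (g (z k) p.2 * ∫ _, (1 : ℝ) ∂(M p.2))) := by
      rw [muB_succ_of_true M χ g z hm]
      congr 1
      funext p
      simp only [integral_const, probReal_univ, smul_eq_mul, mul_one]
      ring
    rw [hdiag, muB_tensor_of_forall_false M χ g z (fun l hl => hb l (by omega))
        (fun x => g (z k) x * ∫ y, f₁ y * f₂ y ∂(M x)) (fun x => g (z k) x * ∫ _, 1 ∂(M x)),
      gammaFK_succ, gammaFK_succ, mul_comm]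

end ClosedForms

section Thm
open MeasureTheory ProbabilityTheory

variable {X Z : Type*} [MeasurableSpace X] [MeasurableSpace Z]

theorem muB_zero_and_unit_string_general
    (M : Kernel X X) [IsMarkovKernel M] (χ : Measure X) [IsProbabilityMeasure χ]
    (g : Z → X → ℝ)
    (z : ℕ → Z) (n m : ℕ) (hmn : m ≤ n)
    (h : X → ℝ) :
    muB χ M g z (fun _ => false) n (fun p => h p.1 * h p.2)
        = (gammaFK χ M g z n h) ^ 2
      ∧ muB χ M g z (fun l => decide (l = m)) n (fun p => h p.1 * h p.2)
        = gammaFK χ M g z m (fun _ => 1)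
            * gammaFK χ M g z m (fun x => (Qop M g z m (n - m) h x) ^ 2) := by
  refine ⟨?_, ?_⟩
  · rw [muB_tensor_of_forall_false M χ g z (fun _ _ => rfl), sq]
  · rw [muB_tensor_eq_of_false_after M χ g z hmn (fun _ hml _ => decide_eq_false hml.ne'),
      muB_tensor_of_first_true M χ g z (by simp)
        (fun _ hl => decide_eq_false hl.ne)]
    simp only [sq]

/-- **Closed forms of the coupled Feynman-Kac measures on zero and unit strings**: for all
`n`, `z_{0:n-1}`, `m ∈ {0,…,n}` and bounded measurable `h`,
`μ_{0_n}⟨z_{0:n-1}⟩h^{⊗2} = (χQ⟨z_{0:n-1}⟩h)²` and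
`μ_{1_{m,n}}⟨z_{0:n-1}⟩h^{⊗2} = χQ⟨z_{0:m-1}⟩1 ⋅ χQ⟨z_{0:m-1}⟩((Q⟨z_{m:n-1}⟩h)²)`. -/
theorem muB_zero_and_unit_string
    (M : Kernel X X) [IsMarkovKernel M] (χ : Measure X) [IsProbabilityMeasure χ]
    (g : Z → X → ℝ) (hgmeas : ∀ zz, Measurable (g zz))
    (hgpos : ∀ zz x, 0 < g zz x) (hgbdd : ∀ zz, ∃ c, ∀ x, g zz x ≤ c)
    (z : ℕ → Z) (n m : ℕ) (hmn : m ≤ n)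
    (h : X → ℝ) (hh : Measurable h) (hhbdd : ∃ c, ∀ x, |h x| ≤ c) :
    muB χ M g z (fun _ => false) n (fun p => h p.1 * h p.2)
        = (gammaFK χ M g z n h) ^ 2
      ∧ muB χ M g z (fun l => decide (l = m)) n (fun p => h p.1 * h p.2)
        = gammaFK χ M g z m (fun _ => 1)
            * gammaFK χ M g z m (fun x => (Qop M g z m (n - m) h x) ^ 2) :=
  muB_zero_and_unit_string_general M χ g z n m hmn h

end Thm
end
end

section
/- Uniform ratio bound under strong mixing: assume (B1). Then for all n ∈ ℕ, z_{0:n−1} ∈ Z^n, every m with 1 ≤ m ≤ n−1, and every x ∈ X, δ_x Q⟨z_{m:n−1}⟩1_X / η⟨z_{0:m−1}⟩Q⟨z_{m:n−1}⟩1_X ≤ (δ̄ ε̄) / (δ̲ ε̲). -/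
noncomputable section

/-!
Write `Q⟨z_{m:n-1}⟩1 = g_{z_m} · M R` with `R = Q⟨z_{m+1:n-1}⟩1`. Strong mixing sandwiches `M R`
between `ε̲ μ(R)` and `ε̄ μ(R)`, so the numerator is at most `δ̄ ε̄ μ(R)`, whereas
`M Q⟨z_{m:n-1}⟩1 ≥ δ̲ ε̲ μ(R)` everywhere because `M g ≥ δ̲`. As `m ≥ 1`, the predictor
`η⟨z_{0:m-1}⟩` averages a function of the form `M f` against the positive weights
`Q⟨z_{0:m-2}⟩ g_{z_{m-1}}`, hence is at least `inf M f ≥ δ̲ ε̲ μ(R)`.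
-/
open MeasureTheory ProbabilityTheory

section BoundedMeasurable

variable {X : Type*} [MeasurableSpace X]

def BoundedMeasurable (h : X → ℝ) : Prop := Measurable h ∧ ∃ C, ∀ x, |h x| ≤ C

lemma boundedMeasurable_const (c : ℝ) : BoundedMeasurable fun _ : X => c :=
  ⟨measurable_const, |c|, fun _ => le_rfl⟩

lemma BoundedMeasurable.mul {h₁ h₂ : X → ℝ} (h₁b : BoundedMeasurable h₁)
    (h₂b : BoundedMeasurable h₂) : BoundedMeasurable fun x => h₁ x * h₂ x := by
  obtain ⟨hm₁, C₁, hC₁⟩ := h₁b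
  obtain ⟨hm₂, C₂, hC₂⟩ := h₂b
  refine ⟨hm₁.mul hm₂, C₁ * C₂, fun x => ?_⟩
  rw [abs_mul]
  exact mul_le_mul (hC₁ x) (hC₂ x) (abs_nonneg _) ((abs_nonneg _).trans (hC₁ x))

lemma BoundedMeasurable.integrable {h : X → ℝ} (hb : BoundedMeasurable h) (ν : Measure X)
    [IsFiniteMeasure ν] : Integrable h ν := by
  obtain ⟨hm, C, hC⟩ := hb
  exact .of_bound hm.aestronglyMeasurable C (ae_of_all _ hC)

lemma BoundedMeasurable.integral_kernel {h : X → ℝ} (hb : BoundedMeasurable h)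
    (M : Kernel X X) [IsMarkovKernel M] : BoundedMeasurable fun x => ∫ y, h y ∂(M x) := by
  obtain ⟨hm, C, hC⟩ := hb
  refine ⟨hm.stronglyMeasurable.integral_kernel.measurable, C, fun x => ?_⟩
  simpa using norm_integral_le_of_norm_le_const (μ := M x) (f := h) (ae_of_all _ hC)

end BoundedMeasurable

lemma integral_pos_of_forall_pos {X : Type*} [MeasurableSpace X] {ν : Measure X} [NeZero ν]
    {f : X → ℝ} (hfi : Integrable f ν) (hf : ∀ x, 0 < f x) : 0 < ∫ x, f x ∂ν := by
  rw [integral_pos_iff_support_of_nonneg (fun x => (hf x).le) hfi,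
    Function.support_eq_univ fun x => (hf x).ne']
  exact Measure.measure_univ_pos.2 (NeZero.ne ν)

namespace Qop

variable {X Z : Type*} [MeasurableSpace X] (M : Kernel X X) (g : Z → X → ℝ) (z : ℕ → Z)

lemma succ_right (k len : ℕ) (h : X → ℝ) :
    Qop M g z k (len + 1) h = Qop M g z k len (fun x => g (z (k + len)) x * ∫ y, h y ∂(M x)) := by
  rw [Qop, List.range_succ, List.foldr_append]
  rfl

lemma succ_left (k len : ℕ) (h : X → ℝ) :
    Qop M g z k (len + 1) h = fun x => g (z k) x * ∫ y, Qop M g z (k + 1) len h y ∂(M x) := by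
  induction len generalizing h with
  | zero => rfl
  | succ len ih => rw [succ_right, ih, succ_right, Nat.add_right_comm, Nat.add_assoc]

lemma const_mul (c : ℝ) (h : X → ℝ) (len : ℕ) :
    ∀ k, Qop M g z k len (fun x => c * h x) = fun x => c * Qop M g z k len h x := by
  induction len with
  | zero => exact fun _ => rfl
  | succ len ih =>
    intro k
    simp only [succ_left, ih, integral_const_mul]
    ext x
    ring

variable {g}

lemma nonneg (hg : ∀ zz x, 0 ≤ g zz x) {h : X → ℝ} (hh : 0 ≤ h) (len : ℕ) :
    ∀ k x, 0 ≤ Qop M g z k len h x := by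
  induction len with
  | zero => exact fun _ => hh
  | succ len ih =>
    intro k x
    rw [succ_left]
    exact mul_nonneg (hg _ x) (integral_nonneg (ih (k + 1)))

variable [IsMarkovKernel M] (hgb : ∀ zz, BoundedMeasurable (g zz))
include hgb

lemma boundedMeasurable {h : X → ℝ} (hb : BoundedMeasurable h) (len : ℕ) :
    ∀ k, BoundedMeasurable (Qop M g z k len h) := by
  induction len with
  | zero => exact fun _ => hb
  | succ len ih =>
    intro k
    rw [succ_left]
    exact (hgb _).mul ((ih (k + 1)).integral_kernel M)

lemma mono (hg : ∀ zz x, 0 ≤ g zz x) {h₁ h₂ : X → ℝ} (hb₁ : BoundedMeasurable h₁)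
    (hb₂ : BoundedMeasurable h₂) (hle : ∀ x, h₁ x ≤ h₂ x) (len : ℕ) :
    ∀ k x, Qop M g z k len h₁ x ≤ Qop M g z k len h₂ x := by
  induction len with
  | zero => exact fun _ => hle
  | succ len ih =>
    intro k x
    simp only [succ_left]
    refine mul_le_mul_of_nonneg_left (integral_mono ?_ ?_ (ih (k + 1))) (hg _ x)
    · exact (boundedMeasurable M z hgb hb₁ len (k + 1)).integrable _
    · exact (boundedMeasurable M z hgb hb₂ len (k + 1)).integrable _

lemma pos (hg : ∀ zz x, 0 < g zz x) {h : X → ℝ} (hb : BoundedMeasurable h) (hh : ∀ x, 0 < h x)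
    (len : ℕ) : ∀ k x, 0 < Qop M g z k len h x := by
  induction len with
  | zero => exact fun _ => hh
  | succ len ih =>
    intro k x
    rw [succ_left]
    exact mul_pos (hg _ x)
      (integral_pos_of_forall_pos ((boundedMeasurable M z hgb hb len (k + 1)).integrable _)
        (ih (k + 1)))

end Qop

section MeasureComparison

variable {X : Type*} [MeasurableSpace X] {ν ρ : Measure X} {c : ℝ} {f : X → ℝ}

lemma const_mul_integral_le_of_smul_le (hc : 0 ≤ c) (hle : ENNReal.ofReal c • ν ≤ ρ)
    (hf : 0 ≤ f) (hfi : Integrable f ρ) : c * ∫ x, f x ∂ν ≤ ∫ x, f x ∂ρ := by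
  simpa [ENNReal.toReal_ofReal hc] using integral_mono_measure hle (ae_of_all _ hf) hfi

lemma integral_le_const_mul_of_le_smul (hc : 0 ≤ c) (hle : ρ ≤ ENNReal.ofReal c • ν)
    (hf : 0 ≤ f) (hfi : Integrable f ν) : ∫ x, f x ∂ρ ≤ c * ∫ x, f x ∂ν := by
  simpa [ENNReal.toReal_ofReal hc] using
    integral_mono_measure hle (ae_of_all _ hf) (hfi.smul_measure ENNReal.ofReal_ne_top)

end MeasureComparison

section StrongMixing

variable {X Z : Type*} [MeasurableSpace X] (M : Kernel X X) [IsMarkovKernel M] {g : Z → X → ℝ}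
  (z : ℕ → Z) (hgb : ∀ zz, BoundedMeasurable (g zz))
include hgb

lemma le_etaFK_succ_of_le_integral (χ : Measure X) [IsProbabilityMeasure χ]
    (hg : ∀ zz x, 0 < g zz x) {h : X → ℝ} (hb : BoundedMeasurable h) {c : ℝ}
    (hc : ∀ x, c ≤ ∫ y, h y ∂(M x)) (m : ℕ) : c ≤ etaFK χ M g z (m + 1) h := by
  have hQ : ∀ x, c * Qop M g z 0 (m + 1) (fun _ => 1) x ≤ Qop M g z 0 (m + 1) h x := by
    intro x
    simp only [Qop.succ_right, integral_const, probReal_univ, smul_eq_mul, mul_one]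
    rw [← congrFun (Qop.const_mul M g z c _ m 0) x]
    refine Qop.mono M z hgb (fun zz x => (hg zz x).le) ((boundedMeasurable_const c).mul (hgb _))
      ((hgb _).mul (hb.integral_kernel M)) (fun x => ?_) m 0 x
    rw [mul_comm]
    exact mul_le_mul_of_nonneg_left (hc x) (hg _ x).le
  have h1b := Qop.boundedMeasurable M z hgb (boundedMeasurable_const 1) (m + 1) 0
  have hγ : 0 < gammaFK χ M g z (m + 1) (fun _ => 1) :=
    integral_pos_of_forall_pos (h1b.integrable χ)
      (Qop.pos M z hgb hg (boundedMeasurable_const 1) (fun _ => one_pos) _ 0)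
  rw [etaFK, le_div_iff₀ hγ, gammaFK, gammaFK, ← integral_const_mul]
  exact integral_mono ((h1b.integrable χ).const_mul c)
    ((Qop.boundedMeasurable M z hgb hb _ 0).integrable χ) hQ

lemma Qop_succ_le_of_le_smul {μ : Measure X} [IsFiniteMeasure μ] {εhi δhi : ℝ} (hε : 0 ≤ εhi)
    (hmix : ∀ x, M x ≤ ENNReal.ofReal εhi • μ) (hg : ∀ zz x, 0 ≤ g zz x)
    (hgup : ∀ zz x, g zz x ≤ δhi) {h : X → ℝ} (hb : BoundedMeasurable h) (hh : 0 ≤ h)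
    (k len : ℕ) (x : X) :
    Qop M g z k (len + 1) h x ≤ δhi * εhi * ∫ y, Qop M g z (k + 1) len h y ∂μ := by
  have hR := Qop.nonneg M z hg hh len (k + 1)
  simp only [Qop.succ_left, mul_assoc]
  exact mul_le_mul (hgup _ x)
    (integral_le_const_mul_of_le_smul hε (hmix x) hR
      ((Qop.boundedMeasurable M z hgb hb len (k + 1)).integrable μ))
    (integral_nonneg (hR ·)) ((hg (z k) x).trans (hgup (z k) x))

lemma le_integral_Qop_succ_of_smul_le {μ : Measure X} [IsFiniteMeasure μ] {εlo δlo : ℝ}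
    (hε : 0 ≤ εlo) (hmix : ∀ x, ENNReal.ofReal εlo • μ ≤ M x) (hg : ∀ zz x, 0 ≤ g zz x)
    (hglo : ∀ zz x, δlo ≤ ∫ y, g zz y ∂(M x)) {h : X → ℝ} (hb : BoundedMeasurable h)
    (hh : 0 ≤ h) (k len : ℕ) (w : X) :
    δlo * εlo * ∫ y, Qop M g z (k + 1) len h y ∂μ ≤ ∫ y, Qop M g z k (len + 1) h y ∂(M w) := by
  have hR := Qop.nonneg M z hg hh len (k + 1)
  have hRb := Qop.boundedMeasurable M z hgb hb len (k + 1)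
  set a := εlo * ∫ y, Qop M g z (k + 1) len h y ∂μ
  calc δlo * εlo * ∫ y, Qop M g z (k + 1) len h y ∂μ = a * δlo := by ring
    _ ≤ a * ∫ y, g (z k) y ∂(M w) :=
      mul_le_mul_of_nonneg_left (hglo _ w) (mul_nonneg hε (integral_nonneg (hR ·)))
    _ = ∫ y, g (z k) y * a ∂(M w) := by rw [integral_mul_const, mul_comm]
    _ ≤ ∫ y, Qop M g z k (len + 1) h y ∂(M w) := by
      refine integral_mono (((hgb _).integrable _).mul_const a)
        ((Qop.boundedMeasurable M z hgb hb _ k).integrable _) fun y => ?_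
      rw [Qop.succ_left]
      exact mul_le_mul_of_nonneg_left
        (const_mul_integral_le_of_smul_le hε (hmix y) hR (hRb.integrable _)) (hg _ y)

end StrongMixing

section Thm
open MeasureTheory ProbabilityTheory

variable {X Z : Type*} [MeasurableSpace X] [MeasurableSpace Z]

/-- **Uniform ratio bound under the strong mixing assumption (B1)**: if
`ε̲ μ(A) ≤ M(x,A) ≤ ε̄ μ(A)`, `‖g_z‖_∞ ≤ δ̄` and `Mg_z(x) ≥ δ̲`, then for all `n`, `z_{0:n-1}`,
all `1 ≤ m ≤ n-1`, and all `x`,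
`δ_x Q⟨z_{m:n-1}⟩1 / η⟨z_{0:m-1}⟩Q⟨z_{m:n-1}⟩1 ≤ (δ̄ε̄)/(δ̲ε̲)`. -/
theorem ratio_bound_strong_mixing
    (M : Kernel X X) [IsMarkovKernel M] (χ : Measure X) [IsProbabilityMeasure χ]
    (g : Z → X → ℝ) (hgmeas : ∀ zz, Measurable (g zz)) (hgpos : ∀ zz x, 0 < g zz x)
    (εlo εhi : ℝ) (hε0 : 0 < εlo) (hεlh : εlo < εhi)
    (μ : Measure X) [IsProbabilityMeasure μ]
    (hmix : ∀ (x : X) (A : Set X), MeasurableSet A →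
      ENNReal.ofReal εlo * μ A ≤ M x A ∧ M x A ≤ ENNReal.ofReal εhi * μ A)
    (δlo δhi : ℝ) (hδ0 : 0 < δlo) (hδlh : δlo < δhi)
    (hgup : ∀ zz x, g zz x ≤ δhi)
    (hglo : ∀ zz x, δlo ≤ ∫ y, g zz y ∂(M x))
    (z : ℕ → Z) (n m : ℕ) (hm1 : 1 ≤ m) (hmn : m < n) (x : X) :
    Qop M g z m (n - m) (fun _ => 1) x
        / etaFK χ M g z m (Qop M g z m (n - m) (fun _ => 1))
      ≤ (δhi * εhi) / (δlo * εlo) := by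
  have hεhi : 0 < εhi := hε0.trans hεlh
  have hδhi : 0 < δhi := hδ0.trans hδlh
  have hg : ∀ zz x, 0 ≤ g zz x := fun zz x => (hgpos zz x).le
  have hgb : ∀ zz, BoundedMeasurable (g zz) := fun zz =>
    ⟨hgmeas zz, δhi, fun x => abs_le.2 ⟨by linarith [hgpos zz x], hgup zz x⟩⟩
  have hlo : ∀ x, ENNReal.ofReal εlo • μ ≤ M x := fun x =>
    Measure.le_iff.2 fun A hA => (hmix x A hA).1
  have hhi : ∀ x, M x ≤ ENNReal.ofReal εhi • μ := fun x =>
    Measure.le_iff.2 fun A hA => (hmix x A hA).2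
  obtain ⟨L, hL⟩ : ∃ L, n - m = L + 1 := ⟨n - m - 1, by omega⟩
  obtain ⟨m, rfl⟩ : ∃ m', m = m' + 1 := ⟨m - 1, by omega⟩
  set μR := ∫ y, Qop M g z (m + 1 + 1) L (fun _ => 1) y ∂μ
  have hμR : 0 ≤ μR := integral_nonneg (Qop.nonneg M z hg (fun _ => zero_le_one) L _)
  have hQx : Qop M g z (m + 1) (n - (m + 1)) (fun _ => 1) x ≤ δhi * εhi * μR := by
    rw [hL]
    exact Qop_succ_le_of_le_smul M z hgb hεhi.le hhi hg hgup (boundedMeasurable_const 1)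
      (fun _ => zero_le_one) _ L x
  have hη : δlo * εlo * μR ≤
      etaFK χ M g z (m + 1) (Qop M g z (m + 1) (n - (m + 1)) (fun _ => 1)) := by
    refine le_etaFK_succ_of_le_integral M z hgb χ hgpos
      (Qop.boundedMeasurable M z hgb (boundedMeasurable_const 1) _ _) (fun w => ?_) m
    rw [hL]
    exact le_integral_Qop_succ_of_smul_le M z hgb hε0.le hlo hg hglo (boundedMeasurable_const 1)
      (fun _ => zero_le_one) _ L w
  refine div_le_of_le_mul₀ ((mul_nonneg (mul_pos hδ0 hε0).le hμR).trans hη) (by positivity) ?_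
  calc _ ≤ δhi * εhi * μR := hQx
    _ = δhi * εhi / (δlo * εlo) * (δlo * εlo * μR) := by field_simp
    _ ≤ _ := mul_le_mul_of_nonneg_left hη (by positivity)

end Thm
end
end
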